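/- With M^(k) as defined by the inductive sequence M^(k) = f_k^{a_k} ··· f_1^{a_1}(M) where a_j = ur_j(M^{(j-1)}) + ur_j*(M^{(j-1)}), one has for all 1 ≤ i ≤ k ≤ n: M^(k)_{i,k} ≥ max over 1 ≤ s ≤ n-k of ( Σ_{r=1}^{s} M_{i+1, k+r} − Σ_{r=1}^{s-1} M_{i, k+r} ). -/

import Mathlib

/-- A segment `[a,b]` is a pair of integers. -/
abbrev Seg : Type := ℕ × ℕ

/-- A multisegment is a finite multiset of segments. -/
abbrev MS : Type := Multiset Seg

/-- `M ∈ MS_n`: all segments `[a,b]` satisfy `1 ≤ a ≤ b ≤ n`. -/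
def IsMS (n : ℕ) (M : MS) : Prop := ∀ s ∈ M, 1 ≤ s.1 ∧ s.1 ≤ s.2 ∧ s.2 ≤ n

/-- A bracket: `op` = "(", `cl` = ")". -/
inductive Br | op | cl
deriving DecidableEq

/-- One step of the left-to-right bracket cancellation procedure.  The state
`(cls, ops)` records the tags of the currently uncanceled ")" (in order) and the
currently uncanceled "(" (in order).  A new "(" is appended to `ops`; a new ")"
cancels the last uncanceled "(" if there is one, and otherwise is appended to `cls`. -/
def step {τ : Type} : (List τ × List τ) → (Br × τ) → (List τ × List τ)
  | (cls, ops), (Br.op, s) => (cls, ops ++ [s])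
  | (cls, ops), (Br.cl, s) => if ops.isEmpty then (cls ++ [s], ops) else (cls, ops.dropLast)

/-- Process a tagged bracket string; the result `(cls, ops)` lists the tags of the
uncanceled ")" and the uncanceled "(" (left to right).  The reduced (uncanceled)
string is `")"^cls.length ++ "("^ops.length`. -/
def scan {τ : Type} (l : List (Br × τ)) : List τ × List τ := l.foldl step ([], [])

/-- Number of uncanceled ")" in a tagged bracket string. -/
def urStr {τ : Type} (l : List (Br × τ)) : ℕ := (scan l).1.length

/-- Number of uncanceled "(" in a tagged bracket string. -/
def epsStr {τ : Type} (l : List (Br × τ)) : ℕ := (scan l).2.length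

/-- Tag of the rightmost uncanceled ")", if any. -/
def lastCl {τ : Type} (l : List (Br × τ)) : Option τ := (scan l).1.getLast?

/-- Tag of the leftmost uncanceled "(", if any. -/
def headOp {τ : Type} (l : List (Br × τ)) : Option τ := (scan l).2.head?

/-- The string `S_i(M)`: segments are ordered by increasing height, then by
decreasing lower endpoint; each `[h,i]` contributes "(" and each `[h,i-1]`
contributes ")".  In the block of segments of height `t` the "(" over the
`[i-t+1, i]` segments come immediately before the ")" over the `[i-t, i-1]`
segments, and blocks appear for `t = 1, 2, …`. -/
def Si (M : MS) (i : ℕ) : List (Br × Seg) :=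
  (List.range i).flatMap fun t0 =>
    let t := t0 + 1
    List.replicate (M.count (i - t + 1, i)) (Br.op, ((i - t + 1 : ℕ), i)) ++
    List.replicate (M.count (i - t, i - 1)) (Br.cl, ((i - t : ℕ), i - 1))

/-- The string `S_i^*(M)`: segments ordered by increasing height, then by
increasing lower endpoint; each `[i,j]` contributes "(" and each `[i+1,j]`
contributes ")".  In the block of height `t` the "(" below the `[i, i+t-1]`
segments come immediately before the ")" below the `[i+1, i+t]` segments. -/
def SiStar (n : ℕ) (M : MS) (i : ℕ) : List (Br × Seg) :=
  (List.range n).flatMap fun t0 =>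
    let t := t0 + 1
    List.replicate (M.count (i, i + t - 1)) (Br.op, (i, i + t - 1)) ++
    List.replicate (M.count (i + 1, i + t)) (Br.cl, (i + 1, i + t))

/-- The crystal operator `f_i` on multisegments: it changes the segment `[h,i-1]`
under the rightmost uncanceled ")" of `S_i(M)` into `[h,i]`, or adds a new
segment `[i,i]` if there is no uncanceled ")". -/
def fM (i : ℕ) (M : MS) : MS :=
  match lastCl (Si M i) with
  | some s => M.erase s + {(s.1, i)}
  | none => M + {(i, i)}

/-- The crystal operator `e_i` on multisegments: it changes the segment `[h,i]`
under the leftmost uncanceled "(" of `S_i(M)` into `[h,i-1]` (deleting it when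
`h = i`), or returns `none` (i.e. `0`) if there is no uncanceled "(". -/
def eM (i : ℕ) (M : MS) : Option MS :=
  match headOp (Si M i) with
  | some s => some (if s.1 = i then M.erase s else M.erase s + {(s.1, i - 1)})
  | none => none

/-- The operator `f_i^*`: it changes the segment `[i+1,j]` under the rightmost
uncanceled ")" of `S_i^*(M)` into `[i,j]`, or adds `[i,i]` if there is none. -/
def fMStar (n i : ℕ) (M : MS) : MS :=
  match lastCl (SiStar n M i) with
  | some s => M.erase s + {(i, s.2)}
  | none => M + {(i, i)}

/-- The operator `e_i^*`: it changes the segment `[i,j]` under the leftmost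
uncanceled "(" of `S_i^*(M)` into `[i+1,j]` (deleting it when `j = i`), or
returns `none` if there is no uncanceled "(". -/
def eMStar (n i : ℕ) (M : MS) : Option MS :=
  match headOp (SiStar n M i) with
  | some s => some (if s.2 = i then M.erase s else M.erase s + {(i + 1, s.2)})
  | none => none

/-- The number of boxes labeled `j` in `M`: each segment `[a,b]` contains one
box labeled `j` for each `a ≤ j ≤ b`. -/
def boxes (M : MS) (j : ℕ) : ℕ :=
  (M.filter (fun s => s.1 ≤ j ∧ j ≤ s.2)).card

/-- The pairing `⟨wt(M), α_i^∨⟩ = #(boxes i-1) + #(boxes i+1) - 2 #(boxes i)`. -/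
def wtPair (M : MS) (i : ℕ) : ℤ :=
  (boxes M (i - 1) : ℤ) + (boxes M (i + 1) : ℤ) - 2 * (boxes M i : ℤ)


/-- The sequence `M = M^(0), M^(1), …`, where `M^(k+1)` is obtained from `M^(k)`
by applying `f_{k+1}` exactly `a_{k+1} = ur_{k+1}(M^(k)) + ur_{k+1}^*(M^(k))` times. -/
def Mseq (n : ℕ) (M : MS) : ℕ → MS
  | 0 => M
  | k + 1 =>
      (fM (k + 1))^[urStr (Si (Mseq n M k) (k + 1)) + urStr (SiStar n (Mseq n M k) (k + 1))]
        (Mseq n M k)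

/-!
Write `N = M^(k)` and `K = k + 1`. The `a_K` applications of `f_K` first turn, from right to
left, every segment `[h, K - 1]` under an uncanceled ")" of `S_K(N)` into `[h, K]`, and then add
`ur*_K(N)` copies of `[K, K]`, after which `S*_K` has no uncanceled ")". Segments ending above `k`
are never touched, so the theorem follows from the invariant, proved by induction on `k`,
`∑_{r < s} M^(k)_{i+1, k+1+r} ≤ ∑_{r < s} M^(k)_{i, k+r}` for `1 ≤ i ≤ k`, `s + k ≤ n`.

For `i = K` the new instances say that every prefix of `S*_K(M^(K))` has at least as many "(" as
")". For `i < K`, the instances `s = 1` at level `k` say that each block of `S_K(N)` has at least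
as many ")" as "(", so at least `N_{i,k} - N_{i+1,K}` of the ")" over `[i, k]` stay uncanceled and
become `[i, K]`; this is what turns the instance `s + 1` at level `k` into the instance `s` at
level `K`.
-/

section Scan

open List

variable {τ : Type}

@[simp] lemma step_op (p : List τ × List τ) (s : τ) : step p (Br.op, s) = (p.1, p.2 ++ [s]) :=
  rfl

@[simp] lemma step_cl_nil (cs : List τ) (s : τ) : step (cs, []) (Br.cl, s) = (cs ++ [s], []) :=
  rfl

@[simp] lemma step_cl_cons (cs : List τ) (o : τ) (os : List τ) (s : τ) :
    step (cs, o :: os) (Br.cl, s) = (cs, (o :: os).dropLast) :=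
  rfl

lemma foldl_step_eq_append_fst (l : List (Br × τ)) (cs os : List τ) :
    l.foldl step (cs, os) = (cs ++ (l.foldl step ([], os)).1, (l.foldl step ([], os)).2) := by
  induction l generalizing cs os with
  | nil => simp
  | cons x l ih =>
    obtain ⟨_ | _, s⟩ := x
    · simpa using ih cs (os ++ [s])
    · cases os with
      | nil => simp [ih (cs ++ [s]), ih [s]]
      | cons o os => simpa using ih cs _

lemma prefix_foldl_step_fst (l : List (Br × τ)) (cs os : List τ) :
    cs <+: (l.foldl step (cs, os)).1 := by
  rw [foldl_step_eq_append_fst]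
  exact prefix_append _ _

lemma scan_append (l₁ l₂ : List (Br × τ)) :
    scan (l₁ ++ l₂) = l₂.foldl step (scan l₁) :=
  foldl_append

lemma urStr_le_urStr_append (l₁ l₂ : List (Br × τ)) : urStr l₁ ≤ urStr (l₁ ++ l₂) :=
  (prefix_foldl_step_fst l₂ _ (scan l₁).2).length_le.trans_eq (by rw [urStr, scan_append])

lemma mem_of_mem_foldl_step_fst {l : List (Br × τ)} {p : List τ × List τ} {x : τ}
    (h : x ∈ (l.foldl step p).1) : x ∈ p.1 ∨ (Br.cl, x) ∈ l := by
  induction l generalizing p with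
  | nil => exact Or.inl h
  | cons e l ih =>
    rcases ih h with h | h
    · obtain ⟨cs, os⟩ := p
      obtain ⟨_ | _, s⟩ := e
      · exact Or.inl h
      · cases os with
        | nil =>
          rcases mem_append.mp h with h | h
          · exact Or.inl h
          · exact Or.inr (by simp_all)
        | cons => exact Or.inl h
    · exact Or.inr (mem_cons_of_mem _ h)

/-- An extra "(" at the bottom of the stack is either never reached, or it cancels the first
")" that would otherwise have stayed uncanceled. -/
lemma foldl_step_cons_snd (l : List (Br × τ)) (cs os : List τ) (z : τ) :
    l.foldl step (cs, z :: os) =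
      if (l.foldl step (cs, os)).1.length = cs.length then
        ((l.foldl step (cs, os)).1, z :: (l.foldl step (cs, os)).2)
      else ((l.foldl step (cs, os)).1.eraseIdx cs.length, (l.foldl step (cs, os)).2) := by
  induction l generalizing os with
  | nil => simp
  | cons x l ih =>
    obtain ⟨_ | _, s⟩ := x
    · simp only [foldl_cons, step_op]
      exact ih _
    · cases os with
      | nil =>
        have h : step (cs, [z]) (Br.cl, s) = (cs, []) := rfl
        rw [foldl_cons, foldl_cons, h, step_cl_nil, foldl_step_eq_append_fst l (cs ++ [s]),
          foldl_step_eq_append_fst l cs, append_assoc,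
          eraseIdx_append_of_length_le le_rfl]
        simp
      | cons o os =>
        rw [foldl_cons, foldl_cons, step_cl_cons, step_cl_cons, dropLast_cons_cons]
        exact ih _

lemma foldl_step_replicate_op (a : ℕ) (z : τ) (cs os : List τ) :
    (replicate a (Br.op, z)).foldl step (cs, os) = (cs, os ++ replicate a z) := by
  induction a generalizing os with
  | zero => simp
  | succ a ih => simp [replicate_succ, ih]

lemma foldl_step_replicate_cl (b : ℕ) (y : τ) (cs os : List τ) :
    (replicate b (Br.cl, y)).foldl step (cs, os) =
      (cs ++ replicate (b - os.length) y, os.take (os.length - b)) := by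
  induction b generalizing cs os with
  | zero => simp
  | succ b ih =>
    rw [replicate_succ, foldl_cons]
    cases os with
    | nil => simp [ih, replicate_succ]
    | cons o os =>
      rw [step_cl_cons, ih, dropLast_eq_take, take_take, length_take]
      simp only [length_cons, Nat.add_sub_cancel, min_eq_left (Nat.le_succ _)]
      congr 3 <;> omega

lemma urStr_cons_op (z : τ) (l : List (Br × τ)) : urStr ((Br.op, z) :: l) = urStr l - 1 := by
  simp only [urStr, scan, foldl_cons, step_op, nil_append]
  rw [foldl_step_cons_snd]
  split_ifs <;> simp_all

lemma urStr_replicate_op_append (j : ℕ) (z : τ) (l : List (Br × τ)) :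
    urStr (replicate j (Br.op, z) ++ l) = urStr l - j := by
  induction j with
  | zero => simp
  | succ j ih => rw [replicate_succ, cons_append, urStr_cons_op, ih]; omega

/-- Every ")" is either canceled, popping a "(", or uncanceled. -/
lemma urStr_add_countP_op (l : List (Br × τ)) :
    urStr l + l.countP (·.1 = Br.op) = epsStr l + l.countP (·.1 = Br.cl) := by
  suffices ∀ p : List τ × List τ,
      (l.foldl step p).1.length + p.2.length + l.countP (·.1 = Br.op) =
        (l.foldl step p).2.length + p.1.length + l.countP (·.1 = Br.cl) by
    simpa [urStr, epsStr, scan] using this ([], [])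
  induction l with
  | nil => intro p; simp; omega
  | cons x l ih =>
    rintro ⟨cs, os⟩
    obtain ⟨_ | _, s⟩ := x
    · have := ih (cs, os ++ [s]); simp_all; omega
    · cases os with
      | nil => have := ih (cs ++ [s], []); simp_all; omega
      | cons o os => have := ih (cs, (o :: os).dropLast); simp_all; omega

lemma foldl_step_block (a b : ℕ) (u v : τ) (cs : List τ) :
    (replicate a (Br.op, u) ++ replicate b (Br.cl, v)).foldl step (cs, []) =
      (cs ++ replicate (b - a) v, (replicate a u).take (a - b)) := by
  rw [foldl_append, foldl_step_replicate_op, nil_append, foldl_step_replicate_cl, length_replicate]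

/-- The rightmost uncanceled ")" must be the last one of the run, so the stack is empty when
the run ends and the "(" put in its place is never popped. -/
lemma scan_fst_replicate_cl_to_op {A B : List (Br × τ)} {c : ℕ} {y : τ} (z : τ)
    (hA : (Br.cl, y) ∉ A) (hB : (Br.cl, y) ∉ B)
    (hy : lastCl (A ++ replicate (c + 1) (Br.cl, y) ++ B) = some y) :
    (scan (A ++ replicate c (Br.cl, y) ++ (Br.op, z) :: B)).1 =
      (scan (A ++ replicate (c + 1) (Br.cl, y) ++ B)).1.dropLast := by
  have hyA : y ∉ (scan A).1 := fun h => hA ((mem_of_mem_foldl_step_fst h).resolve_left (by simp))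
  rw [lastCl, scan_append, scan_append] at hy
  rw [scan_append, scan_append, scan_append, scan_append]
  generalize scan A = p at hy hyA ⊢
  obtain ⟨cs, os⟩ := p
  simp only [foldl_step_replicate_cl] at hy ⊢
  by_cases hc : os.length ≤ c
  · rw [show c + 1 - os.length = c - os.length + 1 by omega,
      show os.length - (c + 1) = 0 by omega, take_zero] at hy ⊢
    rw [foldl_step_eq_append_fst] at hy
    have hB0 : (B.foldl step ([], [])).1 = [] := by
      rw [getLast?_append] at hy
      cases h : (B.foldl step ([], [])).1.getLast? with
      | none => exact getLast?_eq_none_iff.mp h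
      | some w =>
        obtain rfl : w = y := by simpa [h] using hy
        exact absurd ((mem_of_mem_foldl_step_fst (mem_of_getLast? h)).resolve_left (by simp)) hB
    rw [show os.length - c = 0 by omega, take_zero, foldl_cons, step_op, nil_append,
      foldl_step_cons_snd, foldl_step_eq_append_fst B (cs ++ _),
      foldl_step_eq_append_fst B (cs ++ _), hB0]
    simp [replicate_succ']
  · -- the whole run is canceled, so `y` would be the tag of a ")" in `A` or in `B`
    exfalso
    rw [show c + 1 - os.length = 0 by omega, replicate_zero, append_nil,
      foldl_step_eq_append_fst] at hy
    rcases mem_append.mp (mem_of_getLast? hy) with h | h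
    · exact hyA h
    · exact hB ((mem_of_mem_foldl_step_fst h).resolve_left (by simp))

end Scan

section Strings

open List

/-- The block of `S_K(M)` formed by the segments of height `t + 1`. -/
def SiBlock (M : MS) (K t : ℕ) : List (Br × Seg) :=
  replicate (M.count (K - t, K)) (Br.op, (K - t, K)) ++
    replicate (M.count (K - t - 1, K - 1)) (Br.cl, (K - t - 1, K - 1))

def SiStarBlock (M : MS) (K t : ℕ) : List (Br × Seg) :=
  replicate (M.count (K, K + t)) (Br.op, (K, K + t)) ++
    replicate (M.count (K + 1, K + 1 + t)) (Br.cl, (K + 1, K + 1 + t))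

lemma Si_eq_flatMap (M : MS) (K : ℕ) : Si M K = (range K).flatMap (SiBlock M K) := by
  refine flatMap_congr fun t ht => ?_
  rw [mem_range] at ht
  dsimp only [SiBlock]
  rw [show K - (t + 1) + 1 = K - t by omega, show K - (t + 1) = K - t - 1 by omega]

lemma SiStar_eq_flatMap (n : ℕ) (M : MS) (K : ℕ) :
    SiStar n M K = (range n).flatMap (SiStarBlock M K) := by
  refine flatMap_congr fun t _ => ?_
  dsimp only [SiStarBlock]
  rw [show K + (t + 1) - 1 = K + t by omega, show K + (t + 1) = K + 1 + t by omega]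

lemma SiBlock_of_add_eq {M : MS} {K t j : ℕ} (h : t + j + 1 = K) :
    SiBlock M K t = replicate (M.count (j + 1, K)) (Br.op, (j + 1, K)) ++
      replicate (M.count (j, K - 1)) (Br.cl, (j, K - 1)) := by
  rw [SiBlock, show K - t = j + 1 by omega, show j + 1 - 1 = j by omega]

lemma SiBlock_congr {M M' : MS} {K t : ℕ} (h₁ : M.count (K - t, K) = M'.count (K - t, K))
    (h₂ : M.count (K - t - 1, K - 1) = M'.count (K - t - 1, K - 1)) :
    SiBlock M K t = SiBlock M' K t := by
  rw [SiBlock, SiBlock, h₁, h₂]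

lemma eq_of_cl_mem_SiBlock {M : MS} {K t : ℕ} {x : Seg} (h : (Br.cl, x) ∈ SiBlock M K t) :
    x = (K - t - 1, K - 1) ∧ x ∈ M := by
  simp only [SiBlock, mem_append, mem_replicate, Prod.mk.injEq, reduceCtorEq, false_and,
    and_false, false_or] at h
  obtain ⟨hc, -, rfl⟩ := h
  exact ⟨rfl, Multiset.count_ne_zero.mp hc⟩

lemma cl_not_mem_flatMap_SiBlock {M : MS} {K h : ℕ} {ts : List ℕ}
    (hts : ∀ t ∈ ts, K - t - 1 ≠ h) : (Br.cl, (h, K - 1)) ∉ ts.flatMap (SiBlock M K) := by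
  intro hm
  obtain ⟨t, ht, hx⟩ := mem_flatMap.mp hm
  exact hts t ht (congrArg Prod.fst (eq_of_cl_mem_SiBlock hx).1).symm

lemma range_eq_append_cons {K t : ℕ} (h : t < K) :
    range K = range t ++ t :: (range (K - t - 1)).map (t + 1 + ·) := by
  conv_lhs => rw [show K = t + 1 + (K - t - 1) by omega, range_add, range_succ, append_assoc]
  rfl

lemma Si_eq_append_SiBlock (M : MS) {K t : ℕ} (h : t < K) :
    Si M K = (range t).flatMap (SiBlock M K) ++
      (SiBlock M K t ++ ((range (K - t - 1)).map (t + 1 + ·)).flatMap (SiBlock M K)) := by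
  rw [Si_eq_flatMap, range_eq_append_cons h, flatMap_append, flatMap_cons]

lemma Si_cons_self (M : MS) {K : ℕ} (hK : 1 ≤ K) :
    Si ((K, K) ::ₘ M) K = (Br.op, (K, K)) :: Si M K := by
  obtain ⟨K, rfl⟩ : ∃ K', K = K' + 1 := ⟨K - 1, by omega⟩
  rw [Si_eq_flatMap, Si_eq_flatMap, range_succ_eq_map, flatMap_cons, flatMap_cons,
    ← cons_append]
  congr 1
  · simp [SiBlock, replicate_succ]
  · refine flatMap_congr fun t ht => SiBlock_congr ?_ ?_ <;>
      rw [Multiset.count_cons_of_ne (by simp_all <;> omega)]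

lemma SiStar_cons_self {n : ℕ} (M : MS) (K : ℕ) (hn : 1 ≤ n) :
    SiStar n ((K, K) ::ₘ M) K = (Br.op, (K, K)) :: SiStar n M K := by
  obtain ⟨n, rfl⟩ : ∃ n', n = n' + 1 := ⟨n - 1, by omega⟩
  rw [SiStar_eq_flatMap, SiStar_eq_flatMap, range_succ_eq_map, flatMap_cons, flatMap_cons,
    ← cons_append]
  congr 1
  · simp [SiStarBlock, replicate_succ]
  · refine flatMap_congr fun t ht => ?_
    simp only [SiStarBlock]
    rw [Multiset.count_cons_of_ne (by simp_all; omega), Multiset.count_cons_of_ne (by simp_all)]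

lemma Si_replicate_add (M : MS) {K : ℕ} (hK : 1 ≤ K) (j : ℕ) :
    Si (Multiset.replicate j (K, K) + M) K = replicate j (Br.op, (K, K)) ++ Si M K := by
  induction j with
  | zero => simp
  | succ j ih => rw [Multiset.replicate_succ, Multiset.cons_add, Si_cons_self _ hK, ih]; rfl

lemma SiStar_replicate_add {n : ℕ} (M : MS) (K : ℕ) (hn : 1 ≤ n) (j : ℕ) :
    SiStar n (Multiset.replicate j (K, K) + M) K =
      replicate j (Br.op, (K, K)) ++ SiStar n M K := by
  induction j with
  | zero => simp
  | succ j ih => rw [Multiset.replicate_succ, Multiset.cons_add, SiStar_cons_self _ _ hn, ih]; rfl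

lemma SiStar_congr {M M' : MS} (n K : ℕ) (h : ∀ x : Seg, K ≤ x.1 → M.count x = M'.count x) :
    SiStar n M K = SiStar n M' K := by
  refine flatMap_congr fun t _ => ?_
  dsimp only
  rw [h _ le_rfl, h _ (Nat.le_succ K)]

end Strings

section Operators

open List

variable {N : MS} {K : ℕ}

lemma fM_of_lastCl_eq_some {y : Seg} (h : lastCl (Si N K) = some y) :
    fM K N = N.erase y + {(y.1, K)} := by
  rw [fM, h]

lemma fM_of_lastCl_eq_none (h : lastCl (Si N K) = none) : fM K N = (K, K) ::ₘ N := by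
  rw [fM, h, add_comm, Multiset.singleton_add]

lemma lastCl_Si_eq_some {y : Seg} (h : lastCl (Si N K) = some y) :
    y.1 < K ∧ y.2 = K - 1 ∧ y ∈ N := by
  have hmem := (mem_of_mem_foldl_step_fst (mem_of_getLast? h)).resolve_left (by simp)
  rw [Si_eq_flatMap] at hmem
  obtain ⟨t, ht, hx⟩ := mem_flatMap.mp hmem
  obtain ⟨rfl, hy⟩ := eq_of_cl_mem_SiBlock hx
  exact ⟨by simp at ht ⊢; omega, rfl, hy⟩

lemma one_le_fst_of_mem_fM (hK : 1 ≤ K) (hN : ∀ x ∈ N, 1 ≤ x.1) :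
    ∀ x ∈ fM K N, 1 ≤ x.1 := by
  cases h : lastCl (Si N K) with
  | none => simpa [fM_of_lastCl_eq_none h, hK] using hN
  | some y =>
    rw [fM_of_lastCl_eq_some h]
    intro x hx
    rcases Multiset.mem_add.mp hx with hx | hx
    · exact hN x (Multiset.mem_of_mem_erase hx)
    · rw [Multiset.mem_singleton.mp hx]
      exact hN y (lastCl_Si_eq_some h).2.2

lemma one_le_fst_of_mem_fM_iterate (hK : 1 ≤ K) (hN : ∀ x ∈ N, 1 ≤ x.1) (j : ℕ) :
    ∀ x ∈ (fM K)^[j] N, 1 ≤ x.1 := by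
  induction j with
  | zero => exact hN
  | succ j ih => rw [Function.iterate_succ_apply']; exact one_le_fst_of_mem_fM hK ih

lemma count_fM_of_lt {x : Seg} (hx : K < x.2) : (fM K N).count x = N.count x := by
  cases h : lastCl (Si N K) with
  | none =>
    rw [fM_of_lastCl_eq_none h, Multiset.count_cons_of_ne]
    rintro rfl
    exact lt_irrefl _ hx
  | some y =>
    have hy := (lastCl_Si_eq_some h).2.1
    rw [fM_of_lastCl_eq_some h, Multiset.count_add, Multiset.count_erase_of_ne,
      Multiset.count_singleton, if_neg, add_zero]
    · rintro rfl
      exact lt_irrefl _ hx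
    · rintro rfl
      omega

lemma count_fM_iterate_of_lt {x : Seg} (hx : K < x.2) (j : ℕ) :
    ((fM K)^[j] N).count x = N.count x := by
  induction j with
  | zero => rfl
  | succ j ih => rw [Function.iterate_succ_apply', count_fM_of_lt hx, ih]

lemma count_erase_add_of_fst_ne {h : ℕ} {x : Seg} (hx : x.1 ≠ h) :
    (N.erase (h, K - 1) + {(h, K)}).count x = N.count x := by
  rw [Multiset.count_add, Multiset.count_erase_of_ne (by rintro rfl; simp at hx),
    Multiset.count_singleton, if_neg (by rintro rfl; simp at hx), add_zero]

lemma flatMap_SiBlock_erase_add {h : ℕ} {ts : List ℕ}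
    (hts : ∀ t ∈ ts, K - t ≠ h ∧ K - t - 1 ≠ h) :
    ts.flatMap (SiBlock (N.erase (h, K - 1) + {(h, K)}) K) = ts.flatMap (SiBlock N K) :=
  flatMap_congr fun t ht => SiBlock_congr (count_erase_add_of_fst_ne (hts t ht).1)
    (count_erase_add_of_fst_ne (hts t ht).2)

/-- In `S_K(N)` the ")" over `[h, K - 1]` form one run, directly followed by the run of "(" over
`[h, K]`; so moving one segment from `[h, K - 1]` to `[h, K]` turns the last ")" of the first run
into a "(" of the second. -/
lemma Si_erase_add_eq {h : ℕ} (hh : 1 ≤ h) (hK : h < K) (hy : (h, K - 1) ∈ N) :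
    ∃ A B c, (Br.cl, (h, K - 1)) ∉ A ∧ (Br.cl, (h, K - 1)) ∉ B ∧
      Si N K = A ++ replicate (c + 1) (Br.cl, (h, K - 1)) ++ B ∧
      Si (N.erase (h, K - 1) + {(h, K)}) K =
        A ++ replicate c (Br.cl, (h, K - 1)) ++ (Br.op, (h, K)) :: B := by
  set N' := N.erase (h, K - 1) + {(h, K)}
  set t := K - 1 - h
  obtain ⟨c, hc⟩ : ∃ c, N.count (h, K - 1) = c + 1 :=
    Nat.exists_eq_add_one.mpr (Multiset.count_pos.mpr hy)
  have hy' : N'.count (h, K - 1) = c := by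
    rw [Multiset.count_add, Multiset.count_erase_self, Multiset.count_singleton,
      if_neg (by simp; omega), hc]
    rfl
  have hz' : N'.count (h, K) = N.count (h, K) + 1 := by
    rw [Multiset.count_add, Multiset.count_erase_of_ne (by simp; omega),
      Multiset.count_singleton_self]
  have hblock : ∀ M : MS, SiBlock M K t = replicate (M.count (h + 1, K)) (Br.op, (h + 1, K)) ++
      replicate (M.count (h, K - 1)) (Br.cl, (h, K - 1)) := fun M => SiBlock_of_add_eq (by omega)
  have hblock' : SiBlock N' K (t + 1) = (Br.op, (h, K)) :: SiBlock N K (t + 1) := by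
    rw [SiBlock_of_add_eq (j := h - 1) (by omega), SiBlock_of_add_eq (j := h - 1) (by omega),
      Nat.sub_add_cancel hh, count_erase_add_of_fst_ne (x := (h - 1, K - 1)) (by simp; omega),
      hz', replicate_succ, cons_append]
  refine ⟨(range t).flatMap (SiBlock N K) ++ replicate (N.count (h + 1, K)) (Br.op, (h + 1, K)),
    ((range (K - t - 1)).map (t + 1 + ·)).flatMap (SiBlock N K), c, ?_, ?_, ?_, ?_⟩
  · simp only [mem_append, mem_replicate, not_or]
    exact ⟨cl_not_mem_flatMap_SiBlock (by simp; omega), by simp⟩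
  · exact cl_not_mem_flatMap_SiBlock (by simp; omega)
  · rw [Si_eq_append_SiBlock _ (show t < K by omega), hblock, hc]
    simp [append_assoc]
  · rw [Si_eq_append_SiBlock _ (show t < K by omega), hblock, hy',
      count_erase_add_of_fst_ne (x := (h + 1, K)) (by simp),
      flatMap_SiBlock_erase_add (by simp; omega), show K - t - 1 = K - t - 2 + 1 by omega,
      range_succ_eq_map, map_cons, flatMap_cons, flatMap_cons, add_zero, hblock',
      flatMap_SiBlock_erase_add (by simp; omega)]
    simp [append_assoc]

end Operators

section Saturation

open List

variable {N : MS} {K : ℕ}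

lemma scan_Si_fM_of_lastCl_eq_some (hN : ∀ x ∈ N, 1 ≤ x.1) {y : Seg}
    (h : lastCl (Si N K) = some y) :
    (scan (Si (fM K N) K)).1 = (scan (Si N K)).1.dropLast := by
  obtain ⟨hyK, hy₂, hyN⟩ := lastCl_Si_eq_some h
  obtain ⟨y₁, y₂⟩ := y
  obtain rfl : y₂ = K - 1 := hy₂
  obtain ⟨A, B, c, hA, hB, hSi, hSi'⟩ := Si_erase_add_eq (hN _ hyN) hyK hyN
  rw [fM_of_lastCl_eq_some h, hSi', hSi]
  rw [hSi] at h
  exact scan_fst_replicate_cl_to_op _ hA hB h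

lemma SiStar_fM_of_lastCl_eq_some (n : ℕ) {y : Seg} (h : lastCl (Si N K) = some y) :
    SiStar n (fM K N) K = SiStar n N K := by
  have hyK := (lastCl_Si_eq_some h).1
  rw [fM_of_lastCl_eq_some h]
  refine SiStar_congr n K fun x hx => ?_
  rw [Multiset.count_add, Multiset.count_erase_of_ne (by rintro rfl; omega),
    Multiset.count_singleton, if_neg (by rintro rfl; simp at hx; omega), add_zero]

/-- `f_K` moves one segment `[h, K - 1]` under an uncanceled ")" to `[h, K]`. -/
lemma count_fM_add_count_scan_Si (hN : ∀ x ∈ N, 1 ≤ x.1) {y : Seg}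
    (h : lastCl (Si N K) = some y) (i : ℕ) :
    (fM K N).count (i, K) + (scan (Si (fM K N) K)).1.count (i, K - 1) =
      N.count (i, K) + (scan (Si N K)).1.count (i, K - 1) := by
  obtain ⟨hyK, hy₂, -⟩ := lastCl_Si_eq_some h
  obtain ⟨cs, hcs⟩ := getLast?_eq_some_iff.mp h
  rw [scan_Si_fM_of_lastCl_eq_some hN h, hcs, dropLast_concat, fM_of_lastCl_eq_some h,
    Multiset.count_add, Multiset.count_erase_of_ne (by rintro rfl; simp at hy₂; omega),
    count_append, Multiset.count_singleton, count_singleton]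
  obtain ⟨y₁, y₂⟩ := y
  simp only at hy₂ hyK
  subst hy₂
  by_cases hi : i = y₁
  · simp [hi]
    omega
  · simp [hi, Ne.symm hi]

lemma fM_iterate_of_le_urStr (n : ℕ) (hK : 1 ≤ K) (hN : ∀ x ∈ N, 1 ≤ x.1) {j : ℕ}
    (hj : j ≤ urStr (Si N K)) :
    urStr (Si ((fM K)^[j] N) K) = urStr (Si N K) - j ∧
      SiStar n ((fM K)^[j] N) K = SiStar n N K ∧
      ∀ i, ((fM K)^[j] N).count (i, K) + (scan (Si ((fM K)^[j] N) K)).1.count (i, K - 1) =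
        N.count (i, K) + (scan (Si N K)).1.count (i, K - 1) := by
  induction j with
  | zero => simp
  | succ j ih =>
    obtain ⟨h₁, h₂, h₃⟩ := ih (by omega)
    have hP := one_le_fst_of_mem_fM_iterate hK hN j
    obtain ⟨y, hy⟩ : ∃ y, lastCl (Si ((fM K)^[j] N) K) = some y := by
      refine Option.ne_none_iff_exists'.mp fun h => ?_
      rw [lastCl, getLast?_eq_none_iff] at h
      rw [urStr, h] at h₁
      simp at h₁
      omega
    rw [Function.iterate_succ_apply']
    refine ⟨?_, ?_, fun i => ?_⟩
    · rw [urStr, scan_Si_fM_of_lastCl_eq_some hP hy, length_dropLast]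
      rw [urStr] at h₁
      omega
    · rw [SiStar_fM_of_lastCl_eq_some n hy, h₂]
    · rw [count_fM_add_count_scan_Si hP hy, h₃]

lemma fM_iterate_urStr (n : ℕ) (hK : 1 ≤ K) (hN : ∀ x ∈ N, 1 ≤ x.1) :
    urStr (Si ((fM K)^[urStr (Si N K)] N) K) = 0 ∧
      SiStar n ((fM K)^[urStr (Si N K)] N) K = SiStar n N K ∧
      ∀ i, ((fM K)^[urStr (Si N K)] N).count (i, K) =
        N.count (i, K) + (scan (Si N K)).1.count (i, K - 1) := by
  obtain ⟨h₁, h₂, h₃⟩ := fM_iterate_of_le_urStr n hK hN le_rfl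
  rw [Nat.sub_self] at h₁
  refine ⟨h₁, h₂, fun i => ?_⟩
  rw [urStr, length_eq_zero_iff] at h₁
  simpa [h₁] using h₃ i

lemma fM_iterate_of_urStr_eq_zero (hK : 1 ≤ K) (h : urStr (Si N K) = 0) (j : ℕ) :
    (fM K)^[j] N = Multiset.replicate j (K, K) + N := by
  induction j with
  | zero => simp
  | succ j ih =>
    rw [Function.iterate_succ_apply', ih, fM_of_lastCl_eq_none, Multiset.replicate_succ,
      Multiset.cons_add]
    rw [lastCl, getLast?_eq_none_iff, ← length_eq_zero_iff]
    change urStr _ = 0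
    rw [Si_replicate_add _ hK, urStr_replicate_op_append, h, Nat.zero_sub]

end Saturation

section Sequence

open List

variable {n : ℕ} {M : MS}

lemma count_le_count_add_count_scan_Si {N : MS} {K i : ℕ} (hi : i < K)
    (hN : ∀ j, i < j → j < K → N.count (j + 1, K) ≤ N.count (j, K - 1)) :
    N.count (i, K - 1) ≤ N.count (i + 1, K) + (scan (Si N K)).1.count (i, K - 1) := by
  set t := K - 1 - i
  -- the blocks of `S_K(N)` before the one of `[i, K - 1]` all leave the stack empty
  have hpre : ∀ ts : List ℕ, (∀ t' ∈ ts, t' < t) → ∀ cs : List Seg,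
      ∃ cs', (ts.flatMap (SiBlock N K)).foldl step (cs, []) = (cs', []) := by
    intro ts hts
    induction ts with
    | nil => exact fun cs => ⟨cs, rfl⟩
    | cons t' ts ih =>
      intro cs
      have ht' := hts t' mem_cons_self
      rw [flatMap_cons, foldl_append, SiBlock_of_add_eq (j := K - 1 - t') (by omega),
        foldl_step_block, Nat.sub_eq_zero_of_le (hN _ (by omega) (by omega)), take_zero]
      exact ih (fun t'' h => hts t'' (mem_cons_of_mem _ h)) _
  obtain ⟨cs, hcs⟩ := hpre (range t) (fun _ => mem_range.mp) []
  have hpref : cs ++ replicate (N.count (i, K - 1) - N.count (i + 1, K)) (i, K - 1) <+: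
      (scan (Si N K)).1 := by
    rw [Si_eq_append_SiBlock _ (show t < K by omega), ← append_assoc, scan_append, scan_append,
      scan, hcs, SiBlock_of_add_eq (j := i) (by omega), foldl_step_block]
    exact prefix_foldl_step_fst _ _ _
  have := hpref.count_le (i, K - 1)
  rw [count_append, count_replicate_self] at this
  omega

lemma countP_flatMap_SiStarBlock (M : MS) (K s : ℕ) :
    ((range s).flatMap (SiStarBlock M K)).countP (·.1 = Br.op) =
        ∑ r ∈ Finset.range s, M.count (K, K + r) ∧
      ((range s).flatMap (SiStarBlock M K)).countP (·.1 = Br.cl) =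
        ∑ r ∈ Finset.range s, M.count (K + 1, K + 1 + r) := by
  induction s with
  | zero => simp
  | succ s ih => simp [range_succ, Finset.sum_range_succ, SiStarBlock, countP_replicate, ih]

lemma sum_count_le_of_urStr_SiStar_eq_zero {K s : ℕ} (h : urStr (SiStar n M K) = 0)
    (hs : s ≤ n) :
    ∑ r ∈ Finset.range s, M.count (K + 1, K + 1 + r) ≤
      ∑ r ∈ Finset.range s, M.count (K, K + r) := by
  have hpre : urStr ((range s).flatMap (SiStarBlock M K)) = 0 := by
    refine Nat.eq_zero_of_le_zero ?_
    rw [← h, SiStar_eq_flatMap, show n = s + (n - s) by omega, range_add, flatMap_append]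
    exact urStr_le_urStr_append _ _
  have := urStr_add_countP_op ((range s).flatMap (SiStarBlock M K))
  rw [hpre, (countP_flatMap_SiStarBlock M K s).1, (countP_flatMap_SiStarBlock M K s).2] at this
  omega

lemma one_le_fst_of_mem_Mseq (hM : ∀ x ∈ M, 1 ≤ x.1) (k : ℕ) :
    ∀ x ∈ Mseq n M k, 1 ≤ x.1 := by
  induction k with
  | zero => exact hM
  | succ k ih => exact one_le_fst_of_mem_fM_iterate (Nat.le_add_left 1 k) ih _

lemma count_Mseq_succ_of_lt {k : ℕ} {x : Seg} (hx : k + 1 < x.2) :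
    (Mseq n M (k + 1)).count x = (Mseq n M k).count x :=
  count_fM_iterate_of_lt hx _

lemma count_Mseq_of_lt {k : ℕ} {x : Seg} (hx : k < x.2) : (Mseq n M k).count x = M.count x := by
  induction k with
  | zero => rfl
  | succ k ih => rw [count_Mseq_succ_of_lt hx, ih (by omega)]

/-- The `a_{k+1}` applications of `f_{k+1}` first change every segment under an uncanceled ")"
of `S_{k+1}` and then add one `[k+1, k+1]` for each uncanceled ")" of `S*_{k+1}`. -/
lemma Mseq_succ_eq (hM : ∀ x ∈ M, 1 ≤ x.1) (k : ℕ) :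
    Mseq n M (k + 1) = Multiset.replicate (urStr (SiStar n (Mseq n M k) (k + 1))) (k + 1, k + 1) +
      (fM (k + 1))^[urStr (Si (Mseq n M k) (k + 1))] (Mseq n M k) := by
  rw [Mseq, Nat.add_comm (urStr _), Function.iterate_add_apply]
  exact fM_iterate_of_urStr_eq_zero (Nat.le_add_left 1 k)
    (fM_iterate_urStr n (Nat.le_add_left 1 k) (one_le_fst_of_mem_Mseq hM k)).1 _

lemma urStr_SiStar_Mseq_succ (hM : ∀ x ∈ M, 1 ≤ x.1) {k : ℕ} (hk : k < n) :
    urStr (SiStar n (Mseq n M (k + 1)) (k + 1)) = 0 := by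
  rw [Mseq_succ_eq hM, SiStar_replicate_add _ _ (by omega), urStr_replicate_op_append,
    (fM_iterate_urStr n (Nat.le_add_left 1 k) (one_le_fst_of_mem_Mseq hM k)).2.1, Nat.sub_self]

lemma count_Mseq_succ (hM : ∀ x ∈ M, 1 ≤ x.1) {k i : ℕ} (hi : i ≠ k + 1) :
    (Mseq n M (k + 1)).count (i, k + 1) =
      (Mseq n M k).count (i, k + 1) + (scan (Si (Mseq n M k) (k + 1))).1.count (i, k) := by
  rw [Mseq_succ_eq hM, Multiset.count_add, Multiset.count_replicate,
    if_neg (by simp [Ne.symm hi]), zero_add,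
    (fM_iterate_urStr n (Nat.le_add_left 1 k) (one_le_fst_of_mem_Mseq hM k)).2.2,
    Nat.add_sub_cancel]

end Sequence

section Invariant

def ShiftDominated (n : ℕ) (N : MS) (k : ℕ) : Prop :=
  ∀ i s, 1 ≤ i → i ≤ k → s + k ≤ n →
    ∑ r ∈ Finset.range s, N.count (i + 1, k + 1 + r) ≤
      ∑ r ∈ Finset.range s, N.count (i, k + r)

variable {n : ℕ} {M : MS}

lemma sum_count_Mseq_succ_le (hM : ∀ x ∈ M, 1 ≤ x.1) {k i s : ℕ} (hi : 1 ≤ i)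
    (hik : i ≤ k) (hs : s + (k + 1) ≤ n) (ih : ShiftDominated n (Mseq n M k) k) :
    ∑ r ∈ Finset.range s, (Mseq n M (k + 1)).count (i + 1, k + 1 + 1 + r) ≤
      ∑ r ∈ Finset.range s, (Mseq n M (k + 1)).count (i, k + 1 + r) := by
  have hrow : (Mseq n M k).count (i, k) + (Mseq n M k).count (i, k + 1) ≤
      (Mseq n M (k + 1)).count (i, k + 1) + (Mseq n M k).count (i + 1, k + 1) := by
    have := count_le_count_add_count_scan_Si (N := Mseq n M k) (K := k + 1) (i := i) (by omega)
      fun j hj hjk => by simpa using ih j 1 (by omega) (by omega) (by omega)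
    rw [Nat.add_sub_cancel] at this
    rw [count_Mseq_succ hM (by omega)]
    omega
  obtain _ | s := s
  · simp
  have hold := ih i (s + 2) hi hik (by omega)
  rw [Finset.sum_range_succ' (fun r => (Mseq n M k).count (i + 1, k + 1 + r)),
    Finset.sum_range_succ' (fun r => (Mseq n M k).count (i, k + r)),
    Finset.sum_range_succ' (fun r => (Mseq n M k).count (i, k + (r + 1)))] at hold
  have hleft : ∑ r ∈ Finset.range (s + 1), (Mseq n M (k + 1)).count (i + 1, k + 1 + 1 + r) =
      ∑ r ∈ Finset.range (s + 1), (Mseq n M k).count (i + 1, k + 1 + (r + 1)) :=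
    Finset.sum_congr rfl fun r _ => by
      rw [count_Mseq_succ_of_lt (by dsimp only; omega),
        show k + 1 + 1 + r = k + 1 + (r + 1) by omega]
  have hright : ∑ r ∈ Finset.range s, (Mseq n M (k + 1)).count (i, k + 1 + (r + 1)) =
      ∑ r ∈ Finset.range s, (Mseq n M k).count (i, k + (r + 1 + 1)) :=
    Finset.sum_congr rfl fun r _ => by
      rw [count_Mseq_succ_of_lt (by dsimp only; omega),
        show k + 1 + (r + 1) = k + (r + 1 + 1) by omega]
  rw [Finset.sum_range_succ' (fun r => (Mseq n M (k + 1)).count (i, k + 1 + r)), hleft, hright]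
  simp only [add_zero, zero_add] at hold ⊢
  omega

lemma shiftDominated_Mseq (hM : ∀ x ∈ M, 1 ≤ x.1) (k : ℕ) :
    ShiftDominated n (Mseq n M k) k := by
  induction k with
  | zero => intro i s hi hik; omega
  | succ k ih =>
    intro i s hi hik hs
    rcases Nat.lt_or_eq_of_le hik with hik | rfl
    · exact sum_count_Mseq_succ_le hM hi (by omega) hs ih
    · exact sum_count_le_of_urStr_SiStar_eq_zero (urStr_SiStar_Mseq_succ hM (by omega)) (by omega)

end Invariant

theorem stmt16 (n : ℕ) (M : MS) (hM : IsMS n M) (i k : ℕ)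
    (h1 : 1 ≤ i) (hik : i ≤ k) (hkn : k ≤ n) :
    ∀ s : ℕ, 1 ≤ s → s ≤ n - k →
      (∑ r ∈ Finset.Icc 1 s, (M.count (i + 1, k + r) : ℤ))
        - (∑ r ∈ Finset.Icc 1 (s - 1), (M.count (i, k + r) : ℤ))
      ≤ ((Mseq n M k).count (i, k) : ℤ) := by
  intro s hs1 hs2
  obtain ⟨s, rfl⟩ : ∃ s', s = s' + 1 := ⟨s - 1, by omega⟩
  have key := shiftDominated_Mseq (n := n) (fun x hx => (hM x hx).1) k i (s + 1) h1 hik (by omega)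
  rw [Finset.sum_range_succ' (fun r => (Mseq n M k).count (i, k + r))] at key
  have hIcc : ∀ j t, ∑ r ∈ Finset.Icc 1 t, (M.count (j, k + r) : ℤ) =
      ∑ r ∈ Finset.range t, ((Mseq n M k).count (j, k + 1 + r) : ℤ) := fun j t => by
    rw [← Finset.Ico_add_one_right_eq_Icc, Finset.sum_Ico_eq_sum_range, Nat.add_sub_cancel]
    exact Finset.sum_congr rfl fun r _ => by
      rw [← Nat.add_assoc, count_Mseq_of_lt (by dsimp only; omega)]
  rw [hIcc, hIcc, Nat.add_sub_cancel]
  have hshift : ∑ r ∈ Finset.range s, (Mseq n M k).count (i, k + (r + 1)) =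
      ∑ r ∈ Finset.range s, (Mseq n M k).count (i, k + 1 + r) :=
    Finset.sum_congr rfl fun r _ => by rw [Nat.add_comm r, Nat.add_assoc]
  rw [hshift, add_zero] at key
  zify at key
  linarith
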